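/- Projection distance formula: with the notation of the product formula, define Proj_V(w) = [v₁∨⋯∨v_{p-1}∨w] in the projective space of the p-th exterior power of E, equipped with the angular metric d induced by the Grassmann extension of the inner product. Then for w₁, w₂ not in span(V), d(Proj_V(w₁), Proj_V(w₂)) = (τ(V, w₁∨w₂)/(τ(V,w₁)·τ(V,w₂))) · d([w₁],[w₂]), where τ(U,W) = ‖U∨W‖/(‖U‖·‖W‖). -/

import Mathlib

/-!
Write `G` for Gram determinants and split each `w` as `u + k` with `k ∈ span V`, `u ⊥ span V`.
Passing from `(V, w)` to `(V, u)` is a unitriangular change of basis, and the pairing matrix of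
`(V, u)` against `(V, u')` is block diagonal, so `G(V ∨ a, V ∨ b) = G(V) · G(u_a, u_b)`.
All Gram determinants in the formula thus become `G(V)` times Gram determinants of the
orthogonal parts `u₁, u₂`; in particular
`G(V ∨ w₁) G(V ∨ w₂) - |G(V ∨ w₁, V ∨ w₂)|² = G(V) · G(V ∨ w₁ ∨ w₂)`,
after which the formula is real algebra.
-/

open scoped InnerProductSpace ComplexOrder

/-- Gram pairing determinant of two tuples of vectors. -/
noncomputable def gramPairing {E : Type*} [NormedAddCommGroup E]
    [InnerProductSpace ℂ E] {m : Type*} [Fintype m] [DecidableEq m]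
    (a b : m → E) : ℂ :=
  Matrix.det (Matrix.of fun i j => ⟪a i, b j⟫_ℂ)

theorem sqrt_one_sub_div_eq {g A₁ A₂ N B S W₁ W₂ : ℝ} (hg : 0 < g) (hA₁ : 0 < A₁) (hA₂ : 0 < A₂)
    (hS : 0 ≤ S) (hW₁ : 0 < W₁) (hW₂ : 0 < W₂) (hjac : A₁ * A₂ - N ^ 2 = g * B)
    (hSB : S = 0 → B = 0) :
    √(1 - N ^ 2 / (A₁ * A₂)) =
      √B / (√g * √S) / (√A₁ / (√g * W₁) * (√A₂ / (√g * W₂))) * (√S / (W₁ * W₂)) := by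
  have hdiv : 1 - N ^ 2 / (A₁ * A₂) = g * B / (A₁ * A₂) := by
    rw [← hjac]
    field_simp
  rw [hdiv, Real.sqrt_div' _ (by positivity), Real.sqrt_mul hg.le, Real.sqrt_mul hA₁.le]
  rcases hS.eq_or_lt with hS0 | hSpos
  · simp [hSB hS0.symm]
  · have := Real.sqrt_pos.mpr hg
    have := Real.sqrt_pos.mpr hA₁
    have := Real.sqrt_pos.mpr hA₂
    have := Real.sqrt_pos.mpr hSpos
    field_simp

open Matrix Submodule

section GramDeterminants

variable {E : Type*} [NormedAddCommGroup E] [InnerProductSpace ℂ E] {ι κ μ : Type*}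

noncomputable def innerMatrix (a : ι → E) (b : κ → E) : Matrix ι κ ℂ :=
  of fun i j => ⟪a i, b j⟫_ℂ

theorem gramPairing_eq_det_innerMatrix [Fintype ι] [DecidableEq ι] (a b : ι → E) :
    gramPairing a b = (innerMatrix a b).det := rfl

theorem innerMatrix_sum_smul_right [Fintype κ] (a : ι → E) (b : κ → E) (T : Matrix κ μ ℂ) :
    innerMatrix a (fun j => ∑ k, T k j • b k) = innerMatrix a b * T := by
  ext i j
  simp [innerMatrix, mul_apply, mul_comm]

theorem innerMatrix_sum_smul_left [Fintype ι] (a : ι → E) (b : κ → E) (S : Matrix ι μ ℂ) :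
    innerMatrix (fun i => ∑ k, S k i • a k) b = Sᴴ * innerMatrix a b := by
  ext i j
  simp [innerMatrix, mul_apply, mul_comm]

theorem sumElim_add_sum_smul [Fintype κ] [DecidableEq κ] [Fintype ι] [DecidableEq ι]
    (v : κ → E) (u : ι → E) (c : ι → κ → ℂ) :
    Sum.elim v (fun i => u i + ∑ t, c i t • v t) =
      fun j => ∑ k, fromBlocks 1 (of fun t i => c i t) 0 1 k j • Sum.elim v u k := by
  ext (j | j) <;> simp [Fintype.sum_sum_type, one_apply, add_comm]

theorem innerMatrix_sumElim_of_mem_orthogonal (v : κ → E) (a b : ι → E)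
    (ha : ∀ i, a i ∈ (span ℂ (Set.range v))ᗮ) (hb : ∀ i, b i ∈ (span ℂ (Set.range v))ᗮ) :
    innerMatrix (Sum.elim v a) (Sum.elim v b) =
      fromBlocks (innerMatrix v v) 0 0 (innerMatrix a b) := by
  have hv : ∀ t, v t ∈ span ℂ (Set.range v) := fun t => subset_span (Set.mem_range_self t)
  have hav : ∀ i t, ⟪a i, v t⟫_ℂ = 0 := fun i t => inner_left_of_mem_orthogonal (hv t) (ha i)
  have hvb : ∀ i t, ⟪v t, b i⟫_ℂ = 0 := fun i t => inner_right_of_mem_orthogonal (hv t) (hb i)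
  ext (i | i) (j | j) <;> simp [innerMatrix, hav, hvb]

theorem gramPairing_sumElim [Fintype κ] [DecidableEq κ] [Fintype ι] [DecidableEq ι]
    (v : κ → E) (a b : ι → E) [(span ℂ (Set.range v)).HasOrthogonalProjection] :
    gramPairing (Sum.elim v a) (Sum.elim v b) =
      gramPairing v v *
        gramPairing (fun i => a i - (span ℂ (Set.range v)).starProjection (a i))
          (fun i => b i - (span ℂ (Set.range v)).starProjection (b i)) := by
  set K := span ℂ (Set.range v)
  set ua : ι → E := fun i => a i - K.starProjection (a i)
  set ub : ι → E := fun i => b i - K.starProjection (b i)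
  have hspan : ∀ w, ∃ c : κ → ℂ, ∑ t, c t • v t = K.starProjection w :=
    fun w => (mem_span_range_iff_exists_fun ℂ).mp (K.starProjection_apply_mem w)
  choose c hc using hspan
  have ha : a = fun i => ua i + ∑ t, c (a i) t • v t := funext fun i => by simp [ua, hc]
  have hb : b = fun i => ub i + ∑ t, c (b i) t • v t := funext fun i => by simp [ub, hc]
  rw [ha, hb, gramPairing_eq_det_innerMatrix, sumElim_add_sum_smul, sumElim_add_sum_smul,
    innerMatrix_sum_smul_left, innerMatrix_sum_smul_right,
    innerMatrix_sumElim_of_mem_orthogonal v ua ub (fun _ => sub_starProjection_mem_orthogonal _)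
      (fun _ => sub_starProjection_mem_orthogonal _),
    det_mul, det_mul, det_conjTranspose]
  simp [det_fromBlocks_zero₂₁, gramPairing_eq_det_innerMatrix]

section SelfPairing

variable [Fintype ι] [DecidableEq ι]

theorem gramPairing_self_eq_det_gram (a : ι → E) : gramPairing a a = (gram ℂ a).det := rfl

theorem gramPairing_self_nonneg (a : ι → E) : 0 ≤ gramPairing a a :=
  (posSemidef_gram ℂ a).det_nonneg

theorem re_gramPairing_self_nonneg (a : ι → E) : 0 ≤ (gramPairing a a).re :=
  (Complex.nonneg_iff.mp (gramPairing_self_nonneg a)).1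

theorem re_gramPairing_self_pos {a : ι → E} (ha : LinearIndependent ℂ a) :
    0 < (gramPairing a a).re :=
  (Complex.pos_iff.mp (posDef_gram_of_linearIndependent ha).det_pos).1

theorem ofReal_re_gramPairing_self (a : ι → E) :
    ((gramPairing a a).re : ℂ) = gramPairing a a :=
  (Complex.eq_re_of_ofReal_le (Complex.ofReal_zero ▸ gramPairing_self_nonneg a)).symm

theorem gramPairing_sumElim_self_eq_zero [Fintype κ] [DecidableEq κ] (v : κ → E) {a : ι → E}
    (ha : gramPairing a a = 0) : gramPairing (Sum.elim v a) (Sum.elim v a) = 0 := by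
  rw [gramPairing_self_eq_det_gram, ← not_ne_iff, det_gram_ne_zero_iff_linearIndependent]
  rw [gramPairing_self_eq_det_gram, ← not_ne_iff, det_gram_ne_zero_iff_linearIndependent] at ha
  exact fun h => ha (h.comp Sum.inr Sum.inr_injective)

theorem re_gramPairing_sumElim_self_eq_zero [Fintype κ] [DecidableEq κ] (v : κ → E) {a : ι → E}
    (ha : (gramPairing a a).re = 0) : (gramPairing (Sum.elim v a) (Sum.elim v a)).re = 0 := by
  have h : gramPairing a a = 0 := by rw [← ofReal_re_gramPairing_self, ha, Complex.ofReal_zero]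
  rw [gramPairing_sumElim_self_eq_zero v h, Complex.zero_re]

end SelfPairing

theorem gramPairing_fin_one (a b : Fin 1 → E) : gramPairing a b = ⟪a 0, b 0⟫_ℂ :=
  det_fin_one _

theorem gramPairing_self_fin_one (a : Fin 1 → E) : gramPairing a a = ((‖a 0‖ ^ 2 : ℝ) : ℂ) := by
  rw [gramPairing_fin_one, inner_self_eq_norm_sq_to_K]
  norm_cast

theorem gramPairing_self_fin_two (a : Fin 2 → E) :
    gramPairing a a = ((‖a 0‖ ^ 2 * ‖a 1‖ ^ 2 - ‖⟪a 0, a 1⟫_ℂ‖ ^ 2 : ℝ) : ℂ) := by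
  rw [gramPairing_eq_det_innerMatrix, det_fin_two]
  simp only [innerMatrix, of_apply, inner_self_eq_norm_sq_to_K, ← inner_conj_symm (a 1) (a 0),
    Complex.mul_conj']
  norm_cast
  exact (Complex.ofReal_sub _ _).symm

section OrthogonalPart

variable [Fintype κ] [DecidableEq κ] (v : κ → E) [(span ℂ (Set.range v)).HasOrthogonalProjection]

theorem gramPairing_sumElim_fin_one (w₁ w₂ : E) :
    gramPairing (Sum.elim v ![w₁]) (Sum.elim v ![w₂]) =
      gramPairing v v * ⟪w₁ - (span ℂ (Set.range v)).starProjection w₁,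
        w₂ - (span ℂ (Set.range v)).starProjection w₂⟫_ℂ := by
  rw [gramPairing_sumElim, gramPairing_fin_one]
  rfl

theorem gramPairing_sumElim_fin_one_self (w : E) :
    gramPairing (Sum.elim v ![w]) (Sum.elim v ![w]) =
      gramPairing v v * ((‖w - (span ℂ (Set.range v)).starProjection w‖ ^ 2 : ℝ) : ℂ) := by
  rw [gramPairing_sumElim, gramPairing_self_fin_one]
  rfl

theorem gramPairing_sumElim_fin_two_self (w₁ w₂ : E) :
    let u₁ := w₁ - (span ℂ (Set.range v)).starProjection w₁
    let u₂ := w₂ - (span ℂ (Set.range v)).starProjection w₂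
    gramPairing (Sum.elim v ![w₁, w₂]) (Sum.elim v ![w₁, w₂]) =
      gramPairing v v * ((‖u₁‖ ^ 2 * ‖u₂‖ ^ 2 - ‖⟪u₁, u₂⟫_ℂ‖ ^ 2 : ℝ) : ℂ) := by
  rw [gramPairing_sumElim, gramPairing_self_fin_two]
  rfl

theorem re_gramPairing_sumElim_fin_one_self_pos (hv : LinearIndependent ℂ v) {w : E}
    (hw : w ∉ span ℂ (Set.range v)) :
    0 < (gramPairing (Sum.elim v ![w]) (Sum.elim v ![w])).re := by
  have hu : w - (span ℂ (Set.range v)).starProjection w ≠ 0 := fun h =>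
    hw (starProjection_eq_self_iff.mp (sub_eq_zero.mp h).symm)
  rw [gramPairing_sumElim_fin_one_self, ← ofReal_re_gramPairing_self, ← Complex.ofReal_mul,
    Complex.ofReal_re]
  exact mul_pos (re_gramPairing_self_pos hv) (by positivity)

-- The Desnanot–Jacobi identity for the Gram matrix of `(v, w₁, w₂)`.
theorem re_gramPairing_sumElim_mul_sub_norm_sq (w₁ w₂ : E) :
    (gramPairing (Sum.elim v ![w₁]) (Sum.elim v ![w₁])).re *
        (gramPairing (Sum.elim v ![w₂]) (Sum.elim v ![w₂])).re -
      ‖gramPairing (Sum.elim v ![w₁]) (Sum.elim v ![w₂])‖ ^ 2 =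
      (gramPairing v v).re * (gramPairing (Sum.elim v ![w₁, w₂]) (Sum.elim v ![w₁, w₂])).re := by
  rw [gramPairing_sumElim_fin_one_self, gramPairing_sumElim_fin_one_self,
    gramPairing_sumElim_fin_one, gramPairing_sumElim_fin_two_self, ← ofReal_re_gramPairing_self v]
  simp only [← Complex.ofReal_mul, Complex.ofReal_re, norm_mul, Complex.norm_real,
    Real.norm_of_nonneg (re_gramPairing_self_nonneg v)]
  ring

end OrthogonalPart

end GramDeterminants

theorem projection_distance_formula_general {E : Type*} [NormedAddCommGroup E]
    [InnerProductSpace ℂ E] {m : ℕ}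
    (v : Fin m → E) (hv : LinearIndependent ℂ v) (w₁ w₂ : E)
    (hw₁ : w₁ ∉ Submodule.span ℂ (Set.range v))
    (hw₂ : w₂ ∉ Submodule.span ℂ (Set.range v)) :
    Real.sqrt (1 -
        ‖gramPairing (Sum.elim v ![w₁]) (Sum.elim v ![w₂])‖ ^ 2 /
          ((gramPairing (Sum.elim v ![w₁]) (Sum.elim v ![w₁])).re *
            (gramPairing (Sum.elim v ![w₂]) (Sum.elim v ![w₂])).re)) =
      (Real.sqrt (gramPairing (Sum.elim v ![w₁, w₂]) (Sum.elim v ![w₁, w₂])).re /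
          (Real.sqrt (gramPairing v v).re *
            Real.sqrt (gramPairing ![w₁, w₂] ![w₁, w₂]).re)) /
        ((Real.sqrt (gramPairing (Sum.elim v ![w₁]) (Sum.elim v ![w₁])).re /
            (Real.sqrt (gramPairing v v).re * ‖w₁‖)) *
          (Real.sqrt (gramPairing (Sum.elim v ![w₂]) (Sum.elim v ![w₂])).re /
            (Real.sqrt (gramPairing v v).re * ‖w₂‖))) *
        (Real.sqrt (gramPairing ![w₁, w₂] ![w₁, w₂]).re / (‖w₁‖ * ‖w₂‖)) := by
  have : FiniteDimensional ℂ (span ℂ (Set.range v)) :=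
    FiniteDimensional.span_of_finite ℂ (Set.finite_range v)
  have hw_pos : ∀ {w : E}, w ∉ span ℂ (Set.range v) → 0 < ‖w‖ := fun hw =>
    norm_pos_iff.mpr (ne_of_mem_of_not_mem (zero_mem _) hw).symm
  -- If `w₁ ∥ w₂`, the factor `τ(V, w₁ ∨ w₂)` is `x / 0 = 0`; then also `G(V ∨ w₁ ∨ w₂) = 0`,
  -- which makes the left-hand side vanish.
  exact sqrt_one_sub_div_eq (re_gramPairing_self_pos hv)
    (re_gramPairing_sumElim_fin_one_self_pos v hv hw₁)
    (re_gramPairing_sumElim_fin_one_self_pos v hv hw₂) (re_gramPairing_self_nonneg _)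
    (hw_pos hw₁) (hw_pos hw₂) (re_gramPairing_sumElim_mul_sub_norm_sq v w₁ w₂)
    (re_gramPairing_sumElim_self_eq_zero v)

/-- Projection distance formula: for `V = v₁ ∨ ⋯ ∨ v_{p−1}` and `w₁, w₂ ∉ span V`,
the angular distance between `Proj_V(w₁) = [V ∨ w₁]` and `Proj_V(w₂) = [V ∨ w₂]`
(in the projectivization of the `p`-th exterior power, with the Grassmann-extended
inner product expressed through Gram determinants) equals
`(τ(V, w₁∨w₂) / (τ(V,w₁)·τ(V,w₂))) · d([w₁],[w₂])`. -/
theorem projection_distance_formula {E : Type*} [NormedAddCommGroup E]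
    [InnerProductSpace ℂ E] [FiniteDimensional ℂ E] {m : ℕ}
    (v : Fin m → E) (hv : LinearIndependent ℂ v) (w₁ w₂ : E)
    (hw₁ : w₁ ∉ Submodule.span ℂ (Set.range v))
    (hw₂ : w₂ ∉ Submodule.span ℂ (Set.range v)) :
    Real.sqrt (1 -
        ‖gramPairing (Sum.elim v ![w₁]) (Sum.elim v ![w₂])‖ ^ 2 /
          ((gramPairing (Sum.elim v ![w₁]) (Sum.elim v ![w₁])).re *
            (gramPairing (Sum.elim v ![w₂]) (Sum.elim v ![w₂])).re)) =
      (Real.sqrt (gramPairing (Sum.elim v ![w₁, w₂]) (Sum.elim v ![w₁, w₂])).re /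
          (Real.sqrt (gramPairing v v).re *
            Real.sqrt (gramPairing ![w₁, w₂] ![w₁, w₂]).re)) /
        ((Real.sqrt (gramPairing (Sum.elim v ![w₁]) (Sum.elim v ![w₁])).re /
            (Real.sqrt (gramPairing v v).re * ‖w₁‖)) *
          (Real.sqrt (gramPairing (Sum.elim v ![w₂]) (Sum.elim v ![w₂])).re /
            (Real.sqrt (gramPairing v v).re * ‖w₂‖))) *
        (Real.sqrt (gramPairing ![w₁, w₂] ![w₁, w₂]).re / (‖w₁‖ * ‖w₂‖)) :=
  projection_distance_formula_general v hv w₁ w₂ hw₁ hw₂
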